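/- arXiv:1308.3489 — 2 statements merged into one kernel-verified Lean document; each statement's English description precedes it below -/
import Mathlib

section
/- Let G be a commutative group of order q generated by g, with h = g^x. Suppose σ, σ' ∈ ZMod q with σ ≠ σ', and let T = h^σ' be the trapdoor for σ' and c₁ = h^(r+σ) the first ciphertext component for σ with randomness r. If h has order q (q prime, h ≠ 1), then c₁ · T⁻¹ = h^(r + σ - σ') ≠ h^r whenever σ ≠ σ'. Hence if H is injective, Match returns false for mismatched elements. -/
private lemma pow_val_eq_iff {G : Type*} [CommGroup G] (q : ℕ) [NeZero q]
    (h : G) (hord : orderOf h = q) (a b : ZMod q) :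
    h ^ a.val = h ^ b.val ↔ a = b := by
  rw [pow_eq_pow_iff_modEq, hord]
  constructor
  · intro hmod
    have : ((a.val : ℕ) : ZMod q) = ((b.val : ℕ) : ZMod q) :=
      (ZMod.natCast_eq_natCast_iff _ _ _).mpr hmod
    simpa [ZMod.natCast_val, ZMod.cast_id] using this
  · rintro rfl; rfl

/-- Soundness of Match: if `h` has prime order `q` and `σ ≠ σ'`, then
`c₁ · T⁻¹ = h^(r+σ-σ') ≠ h^r`, hence for injective `H` the Match check fails. -/
theorem match_sound {G β : Type*} [CommGroup G] (q : ℕ) [Fact q.Prime] [NeZero q]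
    (h : G) (hord : orderOf h = q) (σ σ' r : ZMod q) (hσ : σ ≠ σ')
    (H : G → β) (hH : Function.Injective H) :
    h ^ ((r + σ).val) * (h ^ (σ'.val))⁻¹ = h ^ ((r + σ - σ').val) ∧
      h ^ ((r + σ - σ').val) ≠ h ^ (r.val) ∧
      H (h ^ ((r + σ).val) * (h ^ (σ'.val))⁻¹) ≠ H (h ^ (r.val)) := by
  have key : h ^ ((r + σ).val) * (h ^ (σ'.val))⁻¹ = h ^ ((r + σ - σ').val) := by
    rw [eq_comm, eq_mul_inv_iff_mul_eq, ← pow_add]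
    have : h ^ ((r + σ - σ').val + σ'.val) = h ^ (((r + σ - σ') + σ').val) := by
      rw [pow_eq_pow_iff_modEq, hord, Nat.ModEq, ZMod.val_add]
      simp [Nat.mod_mod_of_dvd]
    rw [this, sub_add_cancel]
  have hne : h ^ ((r + σ - σ').val) ≠ h ^ (r.val) := by
    rw [Ne, pow_val_eq_iff q h hord]
    intro hc
    apply hσ
    linear_combination hc
  exact ⟨key, hne, fun hc => hne (hH (key ▸ hc))⟩
end

section
/- SearchRole correctness: given a list L of server-encrypted roles, each of the form (h^(rᵢ+σᵢ), H(h^(rᵢ))), and a server trapdoor T = h^σ for role fingerprint σ, the list-scanning procedure returning true iff some element matches (Algorithm 12) returns true if and only if σ ∈ {σ₁, …, σₙ}, assuming H is injective and h has prime order q. -/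
/-- The Match algorithm on a server-encrypted element `(c₁, c₂)` and trapdoor `T`. -/
def MatchAlg {G β : Type*} [Group G] [DecidableEq β] (H : G → β) (c : G × β) (T : G) : Bool :=
  decide (c.2 = H (c.1 * T⁻¹))

/-- SearchRole scans a list of server-encrypted roles for a match with the trapdoor. -/
def SearchRole {G β : Type*} [Group G] [DecidableEq β] (H : G → β)
    (L : List (G × β)) (T : G) : Bool :=
  L.any (fun c => MatchAlg H c T)

/-! Since `orderOf h = n`, the map `a ↦ h ^ a.val` is an injective homomorphism
`ZMod n → G`. So the first component `h ^ (r + s)` of a ciphertext equals `h ^ r * h ^ σ`,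
i.e. it matches the trapdoor `h ^ σ` against the hash `H (h ^ r)`, exactly when `s = σ`. -/

section PowZModVal

variable {M : Type*} [Monoid M] {n : ℕ} [NeZero n] {h : M}

theorem pow_zmod_val_add (hord : orderOf h = n) (a b : ZMod n) :
    h ^ (a + b).val = h ^ a.val * h ^ b.val := by
  rw [ZMod.val_add, ← pow_add, ← pow_mod_orderOf h (_ + _), hord]

theorem pow_zmod_val_injective (hord : orderOf h = n) :
    Function.Injective fun a : ZMod n => h ^ a.val := fun a b hab =>
  ZMod.val_injective n <|
    pow_injOn_Iio_orderOf (hord ▸ ZMod.val_lt a) (hord ▸ ZMod.val_lt b) hab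

end PowZModVal

theorem matchAlg_eq_true_iff {G β : Type*} [Group G] [DecidableEq β] {H : G → β}
    (hH : Function.Injective H) (c g T : G) :
    MatchAlg H (c, H g) T = true ↔ c = g * T := by
  rw [MatchAlg, decide_eq_true_iff, hH.eq_iff, eq_mul_inv_iff_mul_eq, eq_comm]

theorem searchRole_correct_general {G β : Type*} [CommGroup G] [DecidableEq β]
    (q : ℕ) [NeZero q] (h : G) (hord : orderOf h = q)
    (H : G → β) (hH : Function.Injective H) (roles : List (ZMod q × ZMod q))
    (σ : ZMod q) :
    SearchRole H (roles.map (fun p => (h ^ (p.2 + p.1).val, H (h ^ p.2.val)))) (h ^ σ.val)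
      = true ↔ ∃ p ∈ roles, p.1 = σ := by
  have match_iff (p : ZMod q × ZMod q) :
      MatchAlg H (h ^ (p.2 + p.1).val, H (h ^ p.2.val)) (h ^ σ.val) = true ↔ p.1 = σ := by
    rw [matchAlg_eq_true_iff hH, pow_zmod_val_add hord, mul_right_inj]
    exact (pow_zmod_val_injective hord).eq_iff
  simp only [SearchRole, List.any_map, List.any_eq_true, Function.comp_apply, match_iff]

/-- SearchRole correctness: on the list of server-encrypted roles
`(h^(rᵢ+σᵢ), H(h^(rᵢ)))` with trapdoor `h^σ`, the scan returns `true`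
iff `σ` is one of the encrypted role fingerprints `σᵢ`. -/
theorem searchRole_correct {G β : Type*} [CommGroup G] [DecidableEq β]
    (q : ℕ) [Fact q.Prime] [NeZero q] (h : G) (hord : orderOf h = q)
    (H : G → β) (hH : Function.Injective H) (roles : List (ZMod q × ZMod q))
    (σ : ZMod q) :
    SearchRole H (roles.map (fun p => (h ^ (p.2 + p.1).val, H (h ^ p.2.val)))) (h ^ σ.val)
      = true ↔ ∃ p ∈ roles, p.1 = σ :=
  searchRole_correct_general q h hord H hH roles σ
end
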